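/- arXiv:2109.07019 — 2 statements merged into one kernel-verified Lean document; each statement's English description precedes it below -/
import Mathlib

section
/- Let dim H = d, A = {|φ_x⟩⟨φ_x|}, B = {|ψ_y⟩⟨ψ_y|} atomic observables, ν a d×d stochastic matrix, and C = (ν•A)∘B, so that C_{(x,y)} = |η_{xy}⟩⟨η_{xy}| with η_{xy} = Σ_r ν_{rx}^{1/2} ⟨φ_r,ψ_y⟩ φ_r. (a) If ν is doubly stochastic and {φ_r}, {ψ_y} are mutually unbiased bases (|⟨φ_r,ψ_y⟩|² = 1/d for all r,y), then tr[C_{(x,y)}] = 1/d for all x,y. (b) Conversely, if tr[C_{(x,y)}] = 1/d for all x,y, then ν is doubly stochastic. -/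
open scoped InnerProductSpace

lemma onb_norm_sq {H : Type*} [NormedAddCommGroup H] [InnerProductSpace ℂ H]
    {ι : Type*} [Fintype ι] {v : ι → H} (hv : Orthonormal ℂ v) (f : ι → ℂ) :
    ‖∑ i, f i • v i‖ ^ 2 = ∑ i, ‖f i‖ ^ 2 := by
  have h := hv.inner_sum f f Finset.univ
  have h2 : (⟪∑ i, f i • v i, ∑ i, f i • v i⟫_ℂ) = ((‖∑ i, f i • v i‖ : ℂ)) ^ 2 := by
    exact_mod_cast inner_self_eq_norm_sq_to_K _
  rw [h2] at h
  have : ((‖∑ i, f i • v i‖ : ℂ)) ^ 2 = ((∑ i, ‖f i‖ ^ 2 : ℝ) : ℂ) := by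
    rw [h]; push_cast; congr 1; funext i
    exact_mod_cast RCLike.conj_mul (f i)
  exact_mod_cast this

/-- For atomic observables `A = {|φ_x⟩⟨φ_x|}`, `B = {|ψ_y⟩⟨ψ_y|}`, a `d×d` stochastic
matrix `ν`, and `C = (ν•A)∘B` with `C_{(x,y)} = |η_{xy}⟩⟨η_{xy}|`,
`η_{xy} = Σ_r ν_{rx}^{1/2} ⟨φ_r,ψ_y⟩ φ_r` (so `tr[C_{(x,y)}] = ‖η_{xy}‖²`):
(a) if `ν` is doubly stochastic and the bases are mutually unbiased, then
`tr[C_{(x,y)}] = 1/d` for all `x,y`; (b) conversely, if `tr[C_{(x,y)}] = 1/d` for all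
`x,y`, then `ν` is doubly stochastic. -/
theorem stmt18 {H : Type*} [NormedAddCommGroup H] [InnerProductSpace ℂ H]
    {d : ℕ} (hd : 0 < d)
    (φ ψ : OrthonormalBasis (Fin d) ℂ H)
    (ν : Fin d → Fin d → ℝ)
    (hνpos : ∀ r x, 0 ≤ ν r x) (hνrow : ∀ r, ∑ x, ν r x = 1)
    (η : Fin d → Fin d → H)
    (hη : ∀ x y, η x y = ∑ r, ((Real.sqrt (ν r x) : ℂ) * ⟪φ r, ψ y⟫_ℂ) • φ r) :
    ((∀ x, ∑ r, ν r x = 1) → (∀ r y, ‖⟪φ r, ψ y⟫_ℂ‖ ^ 2 = 1 / d) →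
      ∀ x y, ‖η x y‖ ^ 2 = 1 / d) ∧
    ((∀ x y, ‖η x y‖ ^ 2 = 1 / d) → ∀ x, ∑ r, ν r x = 1) := by
  have key : ∀ x y, ‖η x y‖ ^ 2 = ∑ r, ν r x * ‖⟪φ r, ψ y⟫_ℂ‖ ^ 2 := by
    intro x y
    rw [hη x y, onb_norm_sq φ.orthonormal]
    refine Finset.sum_congr rfl fun r _ => ?_
    rw [norm_mul, mul_pow, Complex.norm_real, Real.norm_eq_abs,
      abs_of_nonneg (Real.sqrt_nonneg _), Real.sq_sqrt (hνpos r x)]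
  constructor
  · intro hcol hmub x y
    rw [key x y]
    simp_rw [hmub]
    rw [← Finset.sum_mul, hcol x, one_mul]
  · intro htr x
    have hsum : ∀ r, ∑ y, ‖⟪φ r, ψ y⟫_ℂ‖ ^ 2 = 1 := by
      intro r
      have hrepr : φ r = ∑ y, ⟪ψ y, φ r⟫_ℂ • ψ y := by
        conv_lhs => rw [← ψ.sum_repr (φ r)]
        simp [OrthonormalBasis.repr_apply_apply]
      have := onb_norm_sq ψ.orthonormal (fun y => ⟪ψ y, φ r⟫_ℂ)
      rw [← hrepr] at this
      have hone : ‖φ r‖ = 1 := φ.orthonormal.1 r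
      simp_rw [← norm_inner_symm (φ r)] at this
      rw [← this, hone, one_pow]
    have h1 : ∑ y, ‖η x y‖ ^ 2 = ∑ r, ν r x := by
      simp_rw [key x]
      rw [Finset.sum_comm]
      refine Finset.sum_congr rfl fun r _ => ?_
      rw [← Finset.mul_sum, hsum r, mul_one]
    have h2 : ∑ y, ‖η x y‖ ^ 2 = 1 := by
      simp_rw [htr x]
      rw [Finset.sum_const, Finset.card_univ, Fintype.card_fin, nsmul_eq_mul]
      field_simp
    rw [← h1, h2]
end

section
/- Let H = ℂ², φ₁ = (1,0), φ₂ = (0,1), ψ₁ = (φ₁+φ₂)/√2, ψ₂ = (φ₁−φ₂)/√2, and for a ∈ [0,1] with a ≠ 0, 1, 1/2 let ν = [[a, 1−a],[1−a, a]], D = diag(a^{1/2},(1−a)^{1/2}), E = diag((1−a)^{1/2},a^{1/2}), and C_{(j,k)} = |η_{jk}⟩⟨η_{jk}| with η_{11}=Dψ₁, η_{12}=Dψ₂, η_{21}=Eψ₁, η_{22}=Eψ₂. Then for a 2×2 self-adjoint matrix G, tr[G C_{(j,k)}] = 0 for all j,k ∈ {1,2} if and only if G = [[0, iα],[−iα,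 0]] for some α ∈ ℝ. Consequently, C is not informationally complete: the distinct states ρ₁ = (1/2)I and ρ₂ = [[1/2, iα],[−iα, 1/2]] with 0 < α < 1/2 satisfy tr[ρ₁ C_{(j,k)}] = tr[ρ₂ C_{(j,k)}] for all j,k. -/
open Matrix

lemma tr_aux19 (G : Matrix (Fin 2) (Fin 2) ℂ) (v : Fin 2 → ℂ) :
    (G * Matrix.vecMulVec v (star v)).trace =
      G 0 0 * (v 0 * (starRingEnd ℂ) (v 0)) + G 0 1 * (v 1 * (starRingEnd ℂ) (v 0))
      + G 1 0 * (v 0 * (starRingEnd ℂ) (v 1)) + G 1 1 * (v 1 * (starRingEnd ℂ) (v 1)) := by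
  simp [Matrix.trace_fin_two, Matrix.mul_apply, Fin.sum_univ_two, Matrix.vecMulVec_apply,
    Pi.star_apply, RCLike.star_def]
  ring

/-- The qubit example: with `ψ₁ = (φ₁+φ₂)/√2`, `ψ₂ = (φ₁−φ₂)/√2`,
`D = diag(√a, √(1−a))`, `E = diag(√(1−a), √a)` for `a ≠ 0, 1, 1/2`, and
`C_{(j,k)} = |η_{jk}⟩⟨η_{jk}|` with `η_{11} = Dψ₁`, `η_{12} = Dψ₂`, `η_{21} = Eψ₁`,
`η_{22} = Eψ₂`: a self-adjoint `G` satisfies `tr[G C_{(j,k)}] = 0` for all `j,k` iff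
`G = [[0,iα],[−iα,0]]` for some real `α`. Consequently `C` is not informationally
complete: `ρ₁ = (1/2)I` and `ρ₂ = [[1/2,iα],[−iα,1/2]]` (`0 < α < 1/2`) are distinct
states with the same `C`-distributions. -/
theorem stmt19 (a : ℝ) (ha0 : 0 ≤ a) (ha1 : a ≤ 1)
    (hane0 : a ≠ 0) (hane1 : a ≠ 1) (hanehalf : a ≠ 1 / 2)
    (ψ₁ ψ₂ : Fin 2 → ℂ)
    (hψ₁ : ψ₁ = ![((1 / Real.sqrt 2 : ℝ) : ℂ), ((1 / Real.sqrt 2 : ℝ) : ℂ)])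
    (hψ₂ : ψ₂ = ![((1 / Real.sqrt 2 : ℝ) : ℂ), -(((1 / Real.sqrt 2 : ℝ)) : ℂ)])
    (D E : Matrix (Fin 2) (Fin 2) ℂ)
    (hD : D = Matrix.diagonal ![((Real.sqrt a : ℝ) : ℂ), ((Real.sqrt (1 - a) : ℝ) : ℂ)])
    (hE : E = Matrix.diagonal ![((Real.sqrt (1 - a) : ℝ) : ℂ), ((Real.sqrt a : ℝ) : ℂ)])
    (η : Fin 2 → Fin 2 → (Fin 2 → ℂ))
    (hη00 : η 0 0 = D.mulVec ψ₁) (hη01 : η 0 1 = D.mulVec ψ₂)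
    (hη10 : η 1 0 = E.mulVec ψ₁) (hη11 : η 1 1 = E.mulVec ψ₂)
    (C : Fin 2 → Fin 2 → Matrix (Fin 2) (Fin 2) ℂ)
    (hC : ∀ j k, C j k = Matrix.vecMulVec (η j k) (star (η j k))) :
    (∀ G : Matrix (Fin 2) (Fin 2) ℂ, G.IsHermitian →
      ((∀ j k, (G * C j k).trace = 0) ↔
        ∃ α : ℝ, G = !![0, (α : ℂ) * Complex.I; -((α : ℂ) * Complex.I), 0])) ∧
    (∀ α : ℝ, 0 < α → α < 1 / 2 →
      (∀ j k, ((((1 : ℂ) / 2) • (1 : Matrix (Fin 2) (Fin 2) ℂ)) * C j k).trace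
          = (!![(1 : ℂ) / 2, (α : ℂ) * Complex.I;
                -((α : ℂ) * Complex.I), (1 : ℂ) / 2] * C j k).trace) ∧
      ((1 : ℂ) / 2) • (1 : Matrix (Fin 2) (Fin 2) ℂ)
          ≠ !![(1 : ℂ) / 2, (α : ℂ) * Complex.I;
               -((α : ℂ) * Complex.I), (1 : ℂ) / 2]) := by
  have hs2 : ((Real.sqrt a : ℝ):ℂ) * ((Real.sqrt a : ℝ):ℂ) = (a:ℂ) := by
    rw [← Complex.ofReal_mul, Real.mul_self_sqrt ha0]
  have ht2 : ((Real.sqrt (1-a) : ℝ):ℂ) * ((Real.sqrt (1-a) : ℝ):ℂ) = 1 - (a:ℂ) := by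
    rw [← Complex.ofReal_mul, Real.mul_self_sqrt (by linarith)]; push_cast; ring
  have hc2 : ((1 / Real.sqrt 2 : ℝ):ℂ) * ((1 / Real.sqrt 2 : ℝ):ℂ) = 1/2 := by
    rw [← Complex.ofReal_mul, div_mul_div_comm, Real.mul_self_sqrt (by norm_num)]
    norm_num
  have e00 : η 0 0 = ![((Real.sqrt a:ℝ):ℂ) * ((1/Real.sqrt 2:ℝ):ℂ),
      ((Real.sqrt (1-a):ℝ):ℂ) * ((1/Real.sqrt 2:ℝ):ℂ)] := by
    rw [hη00, hD, hψ₁]; ext i; fin_cases i <;> simp [Matrix.mulVec_diagonal]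
  have e01 : η 0 1 = ![((Real.sqrt a:ℝ):ℂ) * ((1/Real.sqrt 2:ℝ):ℂ),
      -(((Real.sqrt (1-a):ℝ):ℂ) * ((1/Real.sqrt 2:ℝ):ℂ))] := by
    rw [hη01, hD, hψ₂]; ext i; fin_cases i <;> simp [Matrix.mulVec_diagonal]
  have e10 : η 1 0 = ![((Real.sqrt (1-a):ℝ):ℂ) * ((1/Real.sqrt 2:ℝ):ℂ),
      ((Real.sqrt a:ℝ):ℂ) * ((1/Real.sqrt 2:ℝ):ℂ)] := by
    rw [hη10, hE, hψ₁]; ext i; fin_cases i <;> simp [Matrix.mulVec_diagonal]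
  have e11 : η 1 1 = ![((Real.sqrt (1-a):ℝ):ℂ) * ((1/Real.sqrt 2:ℝ):ℂ),
      -(((Real.sqrt a:ℝ):ℂ) * ((1/Real.sqrt 2:ℝ):ℂ))] := by
    rw [hη11, hE, hψ₂]; ext i; fin_cases i <;> simp [Matrix.mulVec_diagonal]
  have key : ∀ G : Matrix (Fin 2) (Fin 2) ℂ,
      (G * C 0 0).trace = ((a:ℂ) * G 0 0 + (1-(a:ℂ)) * G 1 1
        + ((Real.sqrt a : ℝ):ℂ)*((Real.sqrt (1-a) : ℝ):ℂ)*(G 0 1 + G 1 0))/2 ∧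
      (G * C 0 1).trace = ((a:ℂ) * G 0 0 + (1-(a:ℂ)) * G 1 1
        - ((Real.sqrt a : ℝ):ℂ)*((Real.sqrt (1-a) : ℝ):ℂ)*(G 0 1 + G 1 0))/2 ∧
      (G * C 1 0).trace = ((1-(a:ℂ)) * G 0 0 + (a:ℂ) * G 1 1
        + ((Real.sqrt a : ℝ):ℂ)*((Real.sqrt (1-a) : ℝ):ℂ)*(G 0 1 + G 1 0))/2 ∧
      (G * C 1 1).trace = ((1-(a:ℂ)) * G 0 0 + (a:ℂ) * G 1 1
        - ((Real.sqrt a : ℝ):ℂ)*((Real.sqrt (1-a) : ℝ):ℂ)*(G 0 1 + G 1 0))/2 := by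
    intro G
    refine ⟨?_, ?_, ?_, ?_⟩
    · rw [hC, e00, tr_aux19]
      simp only [Matrix.cons_val_zero, Matrix.cons_val_one, Matrix.head_cons, _root_.map_mul,
        map_neg, Complex.conj_ofReal]
      linear_combination (G 0 0 * ((1/Real.sqrt 2:ℝ):ℂ) * ((1/Real.sqrt 2:ℝ):ℂ)) * hs2
        + G 0 0 * (a:ℂ) * hc2
        + (G 0 1 + G 1 0) * ((Real.sqrt a:ℝ):ℂ) * ((Real.sqrt (1-a):ℝ):ℂ) * hc2
        + (G 1 1 * ((1/Real.sqrt 2:ℝ):ℂ) * ((1/Real.sqrt 2:ℝ):ℂ)) * ht2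
        + G 1 1 * (1-(a:ℂ)) * hc2
    · rw [hC, e01, tr_aux19]
      simp only [Matrix.cons_val_zero, Matrix.cons_val_one, Matrix.head_cons, _root_.map_mul,
        map_neg, Complex.conj_ofReal]
      linear_combination (G 0 0 * ((1/Real.sqrt 2:ℝ):ℂ) * ((1/Real.sqrt 2:ℝ):ℂ)) * hs2
        + G 0 0 * (a:ℂ) * hc2
        - (G 0 1 + G 1 0) * ((Real.sqrt a:ℝ):ℂ) * ((Real.sqrt (1-a):ℝ):ℂ) * hc2
        + (G 1 1 * ((1/Real.sqrt 2:ℝ):ℂ) * ((1/Real.sqrt 2:ℝ):ℂ)) * ht2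
        + G 1 1 * (1-(a:ℂ)) * hc2
    · rw [hC, e10, tr_aux19]
      simp only [Matrix.cons_val_zero, Matrix.cons_val_one, Matrix.head_cons, _root_.map_mul,
        map_neg, Complex.conj_ofReal]
      linear_combination (G 0 0 * ((1/Real.sqrt 2:ℝ):ℂ) * ((1/Real.sqrt 2:ℝ):ℂ)) * ht2
        + G 0 0 * (1-(a:ℂ)) * hc2
        + (G 0 1 + G 1 0) * ((Real.sqrt a:ℝ):ℂ) * ((Real.sqrt (1-a):ℝ):ℂ) * hc2
        + (G 1 1 * ((1/Real.sqrt 2:ℝ):ℂ) * ((1/Real.sqrt 2:ℝ):ℂ)) * hs2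
        + G 1 1 * (a:ℂ) * hc2
    · rw [hC, e11, tr_aux19]
      simp only [Matrix.cons_val_zero, Matrix.cons_val_one, Matrix.head_cons, _root_.map_mul,
        map_neg, Complex.conj_ofReal]
      linear_combination (G 0 0 * ((1/Real.sqrt 2:ℝ):ℂ) * ((1/Real.sqrt 2:ℝ):ℂ)) * ht2
        + G 0 0 * (1-(a:ℂ)) * hc2
        - (G 0 1 + G 1 0) * ((Real.sqrt a:ℝ):ℂ) * ((Real.sqrt (1-a):ℝ):ℂ) * hc2
        + (G 1 1 * ((1/Real.sqrt 2:ℝ):ℂ) * ((1/Real.sqrt 2:ℝ):ℂ)) * hs2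
        + G 1 1 * (a:ℂ) * hc2
  have hsne : ((Real.sqrt a : ℝ):ℂ) ≠ 0 := by
    simp only [ne_eq, Complex.ofReal_eq_zero]
    exact Real.sqrt_ne_zero'.mpr (lt_of_le_of_ne ha0 (Ne.symm hane0))
  have htne : ((Real.sqrt (1-a) : ℝ):ℂ) ≠ 0 := by
    simp only [ne_eq, Complex.ofReal_eq_zero]
    exact Real.sqrt_ne_zero'.mpr (by cases lt_or_eq_of_le ha1 with
      | inl h => linarith
      | inr h => exact absurd h hane1)
  have h2a1 : (2*(a:ℂ) - 1) ≠ 0 := by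
    intro h
    have : (((2*a - 1 : ℝ)):ℂ) = 0 := by push_cast; linear_combination h
    have : (2*a - 1 : ℝ) = 0 := by exact_mod_cast this
    apply hanehalf; linarith
  constructor
  · intro G hG
    constructor
    · intro h
      obtain ⟨k1, k2, k3, k4⟩ := key G
      have h00 := h 0 0; have h01 := h 0 1; have h10 := h 1 0; have h11 := h 1 1
      rw [k1] at h00; rw [k2] at h01; rw [k3] at h10; rw [k4] at h11
      have hoff : G 0 1 + G 1 0 = 0 := by
        have hst : ((Real.sqrt a : ℝ):ℂ)*((Real.sqrt (1-a) : ℝ):ℂ) ≠ 0 := mul_ne_zero hsne htne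
        have : ((Real.sqrt a : ℝ):ℂ)*((Real.sqrt (1-a) : ℝ):ℂ)*(G 0 1 + G 1 0) = 0 := by
          linear_combination h00 - h01
        exact (mul_eq_zero.mp this).resolve_left hst
      have h1 : (a:ℂ) * G 0 0 + (1-(a:ℂ)) * G 1 1 = 0 := by linear_combination h00 + h01
      have h2 : (1-(a:ℂ)) * G 0 0 + (a:ℂ) * G 1 1 = 0 := by linear_combination h10 + h11
      have hG00 : G 0 0 = 0 := by
        have : (2*(a:ℂ) - 1) * G 0 0 = 0 := by linear_combination (a:ℂ)*h1 - (1-(a:ℂ))*h2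
        exact (mul_eq_zero.mp this).resolve_left h2a1
      have hG11 : G 1 1 = 0 := by
        have : (2*(a:ℂ) - 1) * G 1 1 = 0 := by linear_combination (a:ℂ)*h2 - (1-(a:ℂ))*h1
        exact (mul_eq_zero.mp this).resolve_left h2a1
      set β : ℝ := (G 0 1).im with hβ
      refine ⟨β, ?_⟩
      have h10c : G 1 0 = (starRingEnd ℂ) (G 0 1) := (hG.apply 1 0).symm
      have hre : (G 0 1).re = 0 := by
        rw [h10c] at hoff
        have := congrArg Complex.re hoff
        simp only [Complex.add_re, Complex.conj_re, Complex.zero_re] at this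
        linarith
      have h01v : G 0 1 = (β : ℂ) * Complex.I := by
        apply Complex.ext <;> simp [hre, hβ]
      have hconj : (starRingEnd ℂ) ((β:ℂ) * Complex.I) = -((β:ℂ) * Complex.I) := by
        rw [_root_.map_mul, Complex.conj_I, Complex.conj_ofReal]; ring
      rw [Matrix.eta_fin_two G, hG00, hG11, h10c, h01v, hconj]
    · rintro ⟨α, rfl⟩
      simp only [Fin.forall_fin_two]
      obtain ⟨k1, k2, k3, k4⟩ := key _
      refine ⟨⟨?_, ?_⟩, ?_, ?_⟩ <;> [rw [k1]; rw [k2]; rw [k3]; rw [k4]] <;>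
        · simp only [Matrix.cons_val', Matrix.cons_val_zero, Matrix.cons_val_one,
            Matrix.head_cons, Matrix.empty_val', Matrix.cons_val_fin_one, Matrix.head_fin_const,
            Matrix.of_apply]
          ring
  · intro α hα0 hα1
    constructor
    · simp only [Fin.forall_fin_two]
      obtain ⟨k1, k2, k3, k4⟩ := key ((((1 : ℂ) / 2) • (1 : Matrix (Fin 2) (Fin 2) ℂ)))
      obtain ⟨m1, m2, m3, m4⟩ := key (!![(1 : ℂ) / 2, (α : ℂ) * Complex.I;
                -((α : ℂ) * Complex.I), (1 : ℂ) / 2])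
      refine ⟨⟨?_, ?_⟩, ?_, ?_⟩ <;>
        [rw [k1, m1]; rw [k2, m2]; rw [k3, m3]; rw [k4, m4]] <;>
        · simp only [Matrix.smul_apply, Matrix.one_apply, Matrix.cons_val', Matrix.cons_val_zero,
            Matrix.cons_val_one, Matrix.head_cons, Matrix.empty_val', Matrix.cons_val_fin_one,
            Matrix.head_fin_const, Matrix.of_apply, smul_eq_mul, if_true, mul_one,
            one_ne_zero, zero_ne_one, if_false, reduceIte]
          norm_num
          try ring
    · intro h
      have h01' := congrFun (congrFun h 0) 1
      simp only [Matrix.smul_apply, Matrix.one_apply, Matrix.cons_val', Matrix.cons_val_zero,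
        Matrix.cons_val_one, Matrix.head_cons, Matrix.empty_val', Matrix.cons_val_fin_one,
        Matrix.head_fin_const, Matrix.of_apply, smul_eq_mul] at h01'
      rw [if_neg (by decide)] at h01'
      have him := congrArg Complex.im h01'
      simp only [mul_zero, Complex.zero_im, Complex.mul_im, Complex.ofReal_re, Complex.I_im,
        Complex.ofReal_im, Complex.I_re, mul_one, mul_zero, add_zero, zero_mul] at him
      exact absurd him.symm hα0.ne'
end
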